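/- Let R be a probability measure on a measurable space Ω and let P be a probability measure on Ω with P ≪ R. Then H(P|R) = sup { ∫ u dP − ∫ (e^u − 1) dR : u : Ω → ℝ measurable, ∫ e^u dR < ∞ and ∫ u⁻ dP < ∞ } ∈ [0, ∞], where u⁻ := max(−u, 0), so that ∫ u dP ∈ (−∞, ∞] is well-defined for each admissible u. -/

import Mathlib

/-!
Write `g = dP/dR`. Since `log x ≤ x - 1` at `x = e^u / g`, every `u` satisfies
`u ≤ log g + e^u / g - 1` `P`-a.e., and `∫ e^u / g dP ≤ ∫ e^u dR`. Integrating gives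
`∫ u dP - ∫ (e^u - 1) dR ≤ ∫ log g dP` for every admissible `u`; for `u = 0` the same inequality
shows that `log g` has a `P`-integrable negative part, so `H(P|R) = ∫ log g dP` in `(-∞, ∞]`.
Conversely, `u = log g` on `{g > 0}` and `u = c` on the `P`-null set `{g = 0}` attains
`H(P|R) - e^c R{g = 0}`, which tends to `H(P|R)` as `c → -∞`.
-/

open MeasureTheory Real Filter Classical
open scoped ENNReal Topology

/-- Relative entropy `H(P|R) ∈ [0,∞]`: the integral `∫ log(dP/dR) dP` if `P ≪ R`
(with value `+∞` when `log(dP/dR)` is not `P`-integrable), and `+∞` otherwise. -/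
noncomputable def relEntropy {Ω : Type*} [MeasurableSpace Ω] (P R : Measure Ω) : EReal :=
  if P ≪ R ∧ Integrable (llr P R) P then ((∫ ω, llr P R ω ∂P : ℝ) : EReal) else ⊤

section ERealIntegral

variable {α : Type*} [MeasurableSpace α] {μ : Measure α} {f g : α → ℝ}

noncomputable def erealIntegral (f : α → ℝ) (μ : Measure α) : EReal :=
  ((∫⁻ x, ENNReal.ofReal (f x) ∂μ : ℝ≥0∞) : EReal)
    - ((∫⁻ x, ENNReal.ofReal (-f x) ∂μ : ℝ≥0∞) : EReal)

lemma erealIntegral_of_integrable (hf : Integrable f μ) : erealIntegral f μ = ∫ x, f x ∂μ := by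
  rw [erealIntegral, integral_eq_lintegral_pos_part_sub_lintegral_neg_part hf, EReal.coe_sub,
    EReal.coe_ennreal_toReal hf.lintegral_lt_top.ne, EReal.coe_ennreal_toReal
      (x := ∫⁻ x, ENNReal.ofReal (-f x) ∂μ) hf.neg.lintegral_lt_top.ne]

lemma erealIntegral_congr_ae (h : f =ᵐ[μ] g) : erealIntegral f μ = erealIntegral g μ := by
  unfold erealIntegral
  congr 2 <;> exact lintegral_congr_ae (h.mono fun x hx => by simp only [hx])

lemma integrable_of_lintegral_ofReal_ne_top (hf : AEStronglyMeasurable f μ)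
    (hpos : ∫⁻ x, ENNReal.ofReal (f x) ∂μ ≠ ∞) (hneg : ∫⁻ x, ENNReal.ofReal (-f x) ∂μ ≠ ∞) :
    Integrable f μ := by
  have hpos' : Integrable (fun x => max (f x) 0) μ :=
    (lintegral_ofReal_ne_top_iff_integrable (f := fun x => max (f x) 0)
      (hf.sup aestronglyMeasurable_const)
      (ae_of_all _ fun _ => le_max_right _ _)).1 (by simpa using hpos)
  have hneg' : Integrable (fun x => max (-f x) 0) μ :=
    (lintegral_ofReal_ne_top_iff_integrable (f := fun x => max (-f x) 0)
      (hf.neg.sup aestronglyMeasurable_const)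
      (ae_of_all _ fun _ => le_max_right _ _)).1 (by simpa using hneg)
  refine (hpos'.sub hneg').congr (ae_of_all _ fun x => ?_)
  rcases le_total 0 (f x) with h | h <;> simp [h]

lemma erealIntegral_eq_top (hf : AEStronglyMeasurable f μ)
    (hneg : ∫⁻ x, ENNReal.ofReal (-f x) ∂μ ≠ ∞) (hfi : ¬ Integrable f μ) :
    erealIntegral f μ = ⊤ := by
  have hpos : ∫⁻ x, ENNReal.ofReal (f x) ∂μ = ∞ := by
    by_contra hpos
    exact hfi (integrable_of_lintegral_ofReal_ne_top hf hpos hneg)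
  rw [erealIntegral, hpos, EReal.coe_ennreal_top, EReal.top_sub]
  simpa using hneg

lemma lintegral_ofReal_lt_top_of_ae_le (hg : Integrable g μ) (h : f ≤ᵐ[μ] g) :
    ∫⁻ x, ENNReal.ofReal (f x) ∂μ < ∞ :=
  (lintegral_mono_ae (h.mono fun _ hx => ENNReal.ofReal_le_ofReal hx)).trans_lt hg.lintegral_lt_top

end ERealIntegral

section RnDeriv

variable {α : Type*} [MeasurableSpace α] {μ ν : Measure α} [SigmaFinite μ]
  [μ.HaveLebesgueDecomposition ν] {f : α → ℝ}

lemma integrable_div_toReal_rnDeriv (hμν : μ ≪ ν) (hf : Integrable f ν) :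
    Integrable (fun x => f x / (μ.rnDeriv ν x).toReal) μ := by
  rw [← integrable_toReal_rnDeriv_mul_iff hμν]
  have hg := (Measure.measurable_rnDeriv μ ν).ennreal_toReal.aestronglyMeasurable (μ := ν)
  refine hf.mono (hg.mul (hf.1.div₀ hg)) (ae_of_all _ fun x => ?_)
  by_cases hx : (μ.rnDeriv ν x).toReal = 0
  · simp [hx]
  · rw [mul_div_cancel₀ _ hx]

lemma integral_div_toReal_rnDeriv_le (hμν : μ ≪ ν) (hf : Integrable f ν) (hf₀ : 0 ≤ f) :
    ∫ x, f x / (μ.rnDeriv ν x).toReal ∂μ ≤ ∫ x, f x ∂ν := by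
  rw [← integral_toReal_rnDeriv_mul hμν]
  refine integral_mono ((integrable_toReal_rnDeriv_mul_iff hμν).2
    (integrable_div_toReal_rnDeriv hμν hf)) hf fun x => ?_
  by_cases hx : (μ.rnDeriv ν x).toReal = 0
  · simpa [hx] using hf₀ x
  · rw [mul_div_cancel₀ _ hx]

lemma ae_toReal_rnDeriv_pos (hμν : μ ≪ ν) : ∀ᵐ x ∂μ, 0 < (μ.rnDeriv ν x).toReal := by
  filter_upwards [Measure.rnDeriv_pos hμν, hμν.ae_le (Measure.rnDeriv_lt_top μ ν)] with x h0 htop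
  exact ENNReal.toReal_pos h0.ne' htop.ne

end RnDeriv

lemma le_log_add_exp_div_sub_one {t : ℝ} (ht : 0 < t) (u : ℝ) : u ≤ log t + exp u / t - 1 := by
  have h := add_one_le_exp (u - log t)
  rw [exp_sub, exp_log ht] at h
  linarith

lemma exp_ite_log_le {t : ℝ} (ht : 0 ≤ t) (c : ℝ) :
    exp (if t = 0 then c else log t) ≤ t + exp c := by
  split_ifs with h
  · simp [h]
  · rw [exp_log (lt_of_le_of_ne ht (Ne.symm h))]
    linarith [exp_pos c]

section RelEntropy

variable {Ω : Type*} [MeasurableSpace Ω] {P R : Measure Ω}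

lemma ae_le_llr_add_exp_div_sub_one [SigmaFinite P] [P.HaveLebesgueDecomposition R]
    (hPR : P ≪ R) (u : Ω → ℝ) :
    ∀ᵐ ω ∂P, u ω ≤ llr P R ω + exp (u ω) / (P.rnDeriv R ω).toReal - 1 := by
  filter_upwards [ae_toReal_rnDeriv_pos hPR] with ω hω
  exact le_log_add_exp_div_sub_one hω (u ω)

lemma lintegral_ofReal_neg_llr_lt_top [SigmaFinite P] [IsFiniteMeasure R] (hPR : P ≪ R) :
    ∫⁻ ω, ENNReal.ofReal (-llr P R ω) ∂P < ∞ := by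
  refine lintegral_ofReal_lt_top_of_ae_le
    (integrable_div_toReal_rnDeriv hPR (integrable_const (1 : ℝ))) ?_
  filter_upwards [ae_le_llr_add_exp_div_sub_one hPR fun _ => 0] with ω h
  rw [exp_zero] at h
  linarith

lemma relEntropy_eq_erealIntegral_llr [SigmaFinite P] [IsFiniteMeasure R] (hPR : P ≪ R) :
    relEntropy P R = erealIntegral (llr P R) P := by
  by_cases hllr : Integrable (llr P R) P
  · rw [relEntropy, if_pos ⟨hPR, hllr⟩, erealIntegral_of_integrable hllr]
  · rw [relEntropy, if_neg (fun h => hllr h.2), erealIntegral_eq_top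
      (measurable_llr P R).aestronglyMeasurable (lintegral_ofReal_neg_llr_lt_top hPR).ne hllr]

lemma erealIntegral_sub_le_relEntropy [IsProbabilityMeasure P] [IsProbabilityMeasure R]
    (hPR : P ≪ R) {u : Ω → ℝ} (hu : AEStronglyMeasurable u P)
    (hexp : Integrable (fun ω => exp (u ω)) R) (hneg : ∫⁻ ω, ENNReal.ofReal (-u ω) ∂P ≠ ∞) :
    erealIntegral u P - ((∫ ω, (exp (u ω) - 1) ∂ R : ℝ) : EReal) ≤ relEntropy P R := by
  by_cases hllr : Integrable (llr P R) P
  swap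
  · simp [relEntropy, hllr]
  set φ := fun ω => exp (u ω) / (P.rnDeriv R ω).toReal
  have hφ : Integrable φ P := integrable_div_toReal_rnDeriv hPR hexp
  have hbound : Integrable (fun ω => llr P R ω + φ ω - 1) P :=
    (hllr.add hφ).sub (integrable_const 1)
  have hle := ae_le_llr_add_exp_div_sub_one hPR u
  have hu_int : Integrable u P :=
    integrable_of_lintegral_ofReal_ne_top hu (lintegral_ofReal_lt_top_of_ae_le hbound hle).ne hneg
  rw [relEntropy, if_pos ⟨hPR, hllr⟩, erealIntegral_of_integrable hu_int, ← EReal.coe_sub,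
    EReal.coe_le_coe_iff]
  calc ∫ ω, u ω ∂P - ∫ ω, (exp (u ω) - 1) ∂ R
      ≤ ∫ ω, (llr P R ω + φ ω - 1) ∂P - ∫ ω, (exp (u ω) - 1) ∂ R :=
        sub_le_sub_right (integral_mono_ae hu_int hbound hle) _
    _ = ∫ ω, llr P R ω ∂P + (∫ ω, φ ω ∂P - ∫ ω, exp (u ω) ∂ R) := by
        rw [integral_sub (f := fun ω => llr P R ω + φ ω) (hllr.add hφ) (integrable_const 1),
          integral_add hllr hφ, integral_sub hexp (integrable_const 1)]
        simp only [integral_const, probReal_univ, smul_eq_mul, mul_one]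
        ring
    _ ≤ ∫ ω, llr P R ω ∂P := by
        linarith [integral_div_toReal_rnDeriv_le hPR hexp fun ω => (exp_pos (u ω)).le]

lemma exists_relEntropy_sub_exp_le [IsProbabilityMeasure P] [IsProbabilityMeasure R]
    (hPR : P ≪ R) (c : ℝ) :
    ∃ u : Ω → ℝ, Measurable u ∧ Integrable (fun ω => exp (u ω)) R ∧
      ∫⁻ ω, ENNReal.ofReal (-u ω) ∂P < ∞ ∧
      relEntropy P R - (exp c : EReal) ≤
        erealIntegral u P - ((∫ ω, (exp (u ω) - 1) ∂ R : ℝ) : EReal) := by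
  set g := fun ω => (P.rnDeriv R ω).toReal
  have hg : Measurable g := (Measure.measurable_rnDeriv P R).ennreal_toReal
  have hg_int : Integrable (fun ω => g ω + exp c) R :=
    Measure.integrable_toReal_rnDeriv.add (integrable_const _)
  set u := fun ω => if g ω = 0 then c else log (g ω)
  have hu : Measurable u := Measurable.ite (hg (measurableSet_singleton 0)) measurable_const hg.log
  have hu_llr : u =ᵐ[P] llr P R := by
    filter_upwards [ae_toReal_rnDeriv_pos hPR] with ω hω
    simp [u, g, hω.ne', llr]
  have hexp_le (ω : Ω) : exp (u ω) ≤ g ω + exp c := exp_ite_log_le ENNReal.toReal_nonneg c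
  have hexp : Integrable (fun ω => exp (u ω)) R :=
    hg_int.mono' (measurable_exp.comp hu).aestronglyMeasurable
      (ae_of_all _ fun ω => by simpa [abs_of_pos (exp_pos _)] using hexp_le ω)
  have hint : ∫ ω, (exp (u ω) - 1) ∂ R ≤ exp c := calc
    _ ≤ ∫ ω, (g ω + exp c - 1) ∂ R :=
        integral_mono (hexp.sub (integrable_const 1)) (hg_int.sub (integrable_const 1))
          fun ω => sub_le_sub_right (hexp_le ω) 1
    _ = exp c := by
        rw [integral_sub hg_int (integrable_const 1), integral_add Measure.integrable_toReal_rnDeriv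
          (integrable_const _), Measure.integral_toReal_rnDeriv hPR]
        simp
  refine ⟨u, hu, hexp, ?_, ?_⟩
  · exact (lintegral_congr_ae (hu_llr.mono fun ω h => by simp only [h])).trans_lt
      (lintegral_ofReal_neg_llr_lt_top hPR)
  · rw [erealIntegral_congr_ae hu_llr, ← relEntropy_eq_erealIntegral_llr hPR]
    exact EReal.sub_le_sub le_rfl (EReal.coe_le_coe_iff.2 hint)

end RelEntropy

lemma tendsto_sub_exp_atBot (x : EReal) :
    Tendsto (fun c : ℝ => x - (exp c : EReal)) atBot (𝓝 x) := by
  have h0 : Tendsto (fun c : ℝ => ((-exp c : ℝ) : EReal)) atBot (𝓝 0) := by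
    simpa using EReal.tendsto_coe.2 tendsto_exp_atBot.neg
  simpa [sub_eq_add_neg, Function.comp_def] using
    (EReal.continuousAt_add (p := (x, 0)) (by simp) (by simp)).tendsto.comp
      (tendsto_const_nhds.prodMk_nhds h0)

/-- `H(P|R) = sup { ∫ u dP − ∫ (e^u − 1) dR : u measurable, ∫ e^u dR < ∞, ∫ u⁻ dP < ∞ }`.
For admissible `u`, `∫ u dP ∈ (−∞,∞]` is well-defined; it is encoded in `EReal` as
`∫⁻ u⁺ dP − ∫⁻ u⁻ dP`, where the subtracted (negative-part) term is finite. -/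
theorem relEntropy_eq_sup_negPart_integrable {Ω : Type*} [MeasurableSpace Ω]
    (P R : Measure Ω) [IsProbabilityMeasure P] [IsProbabilityMeasure R] (hPR : P ≪ R) :
    relEntropy P R =
      sSup {x : EReal | ∃ u : Ω → ℝ, Measurable u ∧
        Integrable (fun ω => Real.exp (u ω)) R ∧
        (∫⁻ ω, ENNReal.ofReal (-(u ω)) ∂P) < ⊤ ∧
        x = ((∫⁻ ω, ENNReal.ofReal (u ω) ∂P : ℝ≥0∞) : EReal)
              - ((∫⁻ ω, ENNReal.ofReal (-(u ω)) ∂P : ℝ≥0∞) : EReal)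
              - ((∫ ω, (Real.exp (u ω) - 1) ∂ R : ℝ) : EReal)} := by
  refine le_antisymm (le_of_tendsto (tendsto_sub_exp_atBot _) (Eventually.of_forall fun c => ?_))
    (sSup_le ?_)
  · obtain ⟨u, hu, hexp, hneg, hle⟩ := exists_relEntropy_sub_exp_le hPR c
    exact hle.trans (le_sSup ⟨u, hu, hexp, hneg, rfl⟩)
  · rintro _ ⟨u, hu, hexp, hneg, rfl⟩
    exact erealIntegral_sub_le_relEntropy hPR hu.aestronglyMeasurable hexp hneg.ne
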